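/- Let R be a non-integer real number with 0 < R < 1, let q > 0 and x > 0 be real. Then, along the coupled sequence h_N = q x / N, the truncated Grünwald–Letnikov sum of order R of f(x) = x converges: lim_{N→∞} (q x/N)^{-R} ∑_{k=0}^{N} (-1)^k C(R,k) (x - k·q x/N) = (sin(πR)/π) · Γ(R) · q^{-R} · x^{1-R} · (1 - Rq/(R-1)). -/

import Mathlib

open Finset Filter Real

/-- Generalized binomial coefficient C(R,k) = R(R-1)⋯(R-k+1)/k! for real R and natural k. -/
noncomputable def genBinom (R : ℝ) (k : ℕ) : ℝ :=
  (∏ i ∈ Finset.range k, (R - i)) / (Nat.factorial k)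

/-!
Since `C(R, k+1) = C(R-1, k+1) + C(R-1, k)` and `(k+1) C(R, k+1) = R C(R-1, k)`, the alternating
sums telescope: `∑_{k ≤ N} (-1)^k C(R,k) = (-1)^N C(R-1,N)` and
`∑_{k ≤ N+1} (-1)^k k C(R,k) = -R (-1)^N C(R-2,N)`. Hence the Grünwald–Letnikov sum of a linear
function is a combination of two single coefficients, and `(-1)^N C(α,N) = ∏_{i<N} (i-α) / N!`
behaves like `N^{-α-1} / Γ(-α)` by Euler's limit formula `GammaSeq_tendsto_Gamma`. The
reflection formula turns `sin(πR)/π · Γ(R)` into `1/Γ(1-R)`.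
-/

open Topology

lemma prod_range_succ_sub {K : Type*} [CommRing K] (R : K) (k : ℕ) :
    ∏ i ∈ range (k + 1), (R - i) = R * ∏ i ∈ range k, (R - 1 - i) := by
  rw [prod_range_succ', mul_comm]
  push_cast
  simp only [sub_zero, sub_add_eq_sub_sub_swap]

lemma genBinom_succ (R : ℝ) (k : ℕ) :
    genBinom R (k + 1) = genBinom (R - 1) (k + 1) + genBinom (R - 1) k := by
  rw [genBinom, genBinom, genBinom, prod_range_succ_sub, prod_range_succ, Nat.factorial_succ]
  push_cast
  field_simp
  ring

lemma succ_mul_genBinom_succ (R : ℝ) (k : ℕ) :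
    ((k : ℝ) + 1) * genBinom R (k + 1) = R * genBinom (R - 1) k := by
  rw [genBinom, genBinom, prod_range_succ_sub, Nat.factorial_succ]
  push_cast
  field_simp

lemma sum_range_succ_neg_one_pow_mul_genBinom (R : ℝ) (N : ℕ) :
    ∑ k ∈ range (N + 1), (-1 : ℝ) ^ k * genBinom R k = (-1) ^ N * genBinom (R - 1) N := by
  induction N with
  | zero => simp [genBinom]
  | succ N ih =>
    rw [sum_range_succ, ih, genBinom_succ, pow_succ]
    ring

lemma sum_range_neg_one_pow_mul_natCast_mul_genBinom (R : ℝ) (N : ℕ) :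
    ∑ k ∈ range (N + 2), (-1 : ℝ) ^ k * k * genBinom R k =
      -R * ((-1) ^ N * genBinom (R - 2) N) := by
  have hshift (i : ℕ) : (-1 : ℝ) ^ (i + 1) * ((i + 1 : ℕ) : ℝ) * genBinom R (i + 1) =
      -R * ((-1) ^ i * genBinom (R - 1) i) := by
    push_cast
    rw [mul_assoc, succ_mul_genBinom_succ, pow_succ]
    ring
  rw [sum_range_succ', sum_congr rfl fun i _ => hshift i, ← mul_sum,
    sum_range_succ_neg_one_pow_mul_genBinom, sub_sub, one_add_one_eq_two]
  simp

lemma sum_range_neg_one_pow_mul_genBinom_mul_sub (R h x : ℝ) (N : ℕ) :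
    ∑ k ∈ range (N + 2), (-1 : ℝ) ^ k * genBinom R k * (x - k * h) =
      x * ((-1) ^ (N + 1) * genBinom (R - 1) (N + 1)) +
        h * R * ((-1) ^ N * genBinom (R - 2) N) := by
  have hsplit (k : ℕ) : (-1 : ℝ) ^ k * genBinom R k * (x - k * h) =
      x * ((-1) ^ k * genBinom R k) - h * ((-1) ^ k * k * genBinom R k) := by
    ring
  rw [sum_congr rfl fun k _ => hsplit k, sum_sub_distrib, ← mul_sum, ← mul_sum,
    sum_range_succ_neg_one_pow_mul_genBinom, sum_range_neg_one_pow_mul_natCast_mul_genBinom]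
  ring

lemma neg_one_pow_mul_genBinom (α : ℝ) (N : ℕ) :
    (-1 : ℝ) ^ N * genBinom α N = (∏ i ∈ range N, (-α + i)) / N.factorial := by
  have hneg : ∀ i ∈ range N, -α + i = -1 * (α - i) := fun i _ => by ring
  rw [genBinom, mul_div_assoc', prod_congr rfl hneg, prod_mul_distrib, prod_const, card_range]

lemma tendsto_rpow_mul_neg_one_pow_mul_genBinom {α : ℝ} (hα : α < 0) :
    Tendsto (fun N : ℕ => (N : ℝ) ^ (α + 1) * ((-1) ^ N * genBinom α N)) atTop
      (𝓝 (Gamma (-α))⁻¹) := by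
  have hΓ : Gamma (-α) ≠ 0 := (Gamma_pos_of_pos (neg_pos.mpr hα)).ne'
  have hlim := (tendsto_natCast_div_add_atTop (-α)).mul ((GammaSeq_tendsto_Gamma (-α)).inv₀ hΓ)
  rw [one_mul] at hlim
  refine hlim.congr' ?_
  filter_upwards [eventually_gt_atTop 0] with N hN
  have hN : (0 : ℝ) < N := by exact_mod_cast hN
  have hprod : 0 < ∏ i ∈ range N, (-α + i) :=
    prod_pos fun i _ => by linarith [i.cast_nonneg (α := ℝ)]
  have hpow : (N : ℝ) ^ (α + 1) * (N : ℝ) ^ (-α) = N := by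
    rw [← rpow_add hN]; simp
  rw [neg_one_pow_mul_genBinom, GammaSeq, prod_range_succ]
  have hNα : (N : ℝ) + -α ≠ 0 := by linarith
  field_simp
  linear_combination (-((N : ℝ) - α)) * hpow

lemma tendsto_add_one_rpow_mul_of_tendsto_rpow_mul {p L : ℝ} {g : ℕ → ℝ}
    (h : Tendsto (fun n : ℕ => (n : ℝ) ^ p * g n) atTop (𝓝 L)) :
    Tendsto (fun n : ℕ => ((n : ℝ) + 1) ^ p * g n) atTop (𝓝 L) := by
  have hratio : Tendsto (fun n : ℕ => (((n : ℝ) + 1) / n) ^ p) atTop (𝓝 1) := by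
    have := ((tendsto_natCast_div_add_atTop (1 : ℝ)).inv₀ one_ne_zero).rpow_const
      (p := p) (Or.inl (inv_ne_zero one_ne_zero))
    simpa only [inv_div, inv_one, one_rpow] using this
  refine (one_mul L ▸ hratio.mul h).congr' ?_
  filter_upwards [eventually_gt_atTop 0] with n hn
  have hn : (0 : ℝ) < n := by exact_mod_cast hn
  rw [← mul_assoc, ← mul_rpow (by positivity) hn.le, div_mul_cancel₀ _ hn.ne']

lemma sin_pi_mul_div_pi_mul_Gamma {R : ℝ} (hR : sin (π * R) ≠ 0) :
    sin (π * R) / π * Gamma R = (Gamma (1 - R))⁻¹ := by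
  have hrefl := Gamma_mul_Gamma_one_sub R
  have hΓ : Gamma (1 - R) ≠ 0 := by
    intro h
    rw [h, mul_zero, eq_comm, div_eq_zero_iff] at hrefl
    exact hrefl.elim pi_ne_zero hR
  field_simp
  rw [mul_assoc, hrefl]
  field_simp

lemma inv_Gamma_one_sub_mul_rpow_eq_add {R q x : ℝ} (hR : R ≠ 1) (hq : 0 < q) (hx : 0 < x) :
    (Gamma (1 - R))⁻¹ * q ^ (-R) * x ^ (1 - R) * (1 - R * q / (R - 1)) =
      (q * x) ^ (-R) * x * (Gamma (1 - R))⁻¹ + (q * x) ^ (1 - R) * R * (Gamma (2 - R))⁻¹ := by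
  have hR' : 1 - R ≠ 0 := sub_ne_zero.mpr hR.symm
  rw [show 2 - R = (1 - R) + 1 by ring, Gamma_add_one hR', mul_rpow hq.le hx.le,
    mul_rpow hq.le hx.le, rpow_sub hq, rpow_sub hx, rpow_neg hq.le, rpow_neg hx.le, rpow_one,
    rpow_one]
  have : R - 1 ≠ 0 := sub_ne_zero.mpr hR
  field_simp
  ring

lemma div_rpow_neg_mul_sum_range_neg_one_pow_mul_genBinom_mul_sub (R c x : ℝ) {n : ℝ}
    (hc : 0 < c) (hn : 0 < n) (N : ℕ) :
    (c / n) ^ (-R) * ∑ k ∈ range (N + 2), (-1 : ℝ) ^ k * genBinom R k * (x - k * (c / n)) =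
      c ^ (-R) * x * (n ^ R * ((-1) ^ (N + 1) * genBinom (R - 1) (N + 1))) +
        c ^ (1 - R) * R * (n ^ (R - 1) * ((-1) ^ N * genBinom (R - 2) N)) := by
  rw [sum_range_neg_one_pow_mul_genBinom_mul_sub, div_rpow hc.le hn.le, rpow_neg hn.le,
    rpow_sub_one hn.ne', show 1 - R = -R + 1 by ring, rpow_add_one hc.ne']
  field_simp

theorem coupled_GL_linear_limit_general (R : ℝ)
    (hR0 : 0 < R) (hR1 : R < 1) (q x : ℝ) (hq : 0 < q) (hx : 0 < x) :
    Filter.Tendsto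
      (fun N : ℕ =>
        (q * x / N) ^ (-R) *
          ∑ k ∈ Finset.range (N + 1),
            (-1 : ℝ) ^ k * genBinom R k * (x - k * (q * x / N)))
      Filter.atTop
      (nhds (Real.sin (Real.pi * R) / Real.pi * Real.Gamma R * q ^ (-R) * x ^ (1 - R)
        * (1 - R * q / (R - 1)))) := by
  have hA := (tendsto_rpow_mul_neg_one_pow_mul_genBinom (α := R - 1) (by linarith)).comp
    (tendsto_add_atTop_nat 1)
  have hB := tendsto_add_one_rpow_mul_of_tendsto_rpow_mul
    (tendsto_rpow_mul_neg_one_pow_mul_genBinom (α := R - 2) (by linarith))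
  rw [neg_sub, sub_add_cancel] at hA
  rw [neg_sub, show R - 2 + 1 = R - 1 by ring] at hB
  have hsin : sin (π * R) ≠ 0 :=
    (sin_pos_of_pos_of_lt_pi (by positivity) (by nlinarith [pi_pos])).ne'
  rw [sin_pi_mul_div_pi_mul_Gamma hsin, inv_Gamma_one_sub_mul_rpow_eq_add hR1.ne hq hx,
    ← tendsto_add_atTop_iff_nat 1]
  refine ((hA.const_mul _).add (hB.const_mul _)).congr fun N => ?_
  rw [Function.comp_apply, Nat.cast_add_one,
    div_rpow_neg_mul_sum_range_neg_one_pow_mul_genBinom_mul_sub _ _ _ (by positivity)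
      (by positivity)]

/-- For non-integer 0 < R < 1 and q, x > 0, the truncated Grünwald–Letnikov sum of
    order R of f(x) = x along h_N = qx/N converges to
    (sin(πR)/π) Γ(R) q^{-R} x^{1-R} (1 - Rq/(R-1)). -/
theorem coupled_GL_linear_limit (R : ℝ) (hR : ∀ n : ℤ, R ≠ (n : ℝ))
    (hR0 : 0 < R) (hR1 : R < 1) (q x : ℝ) (hq : 0 < q) (hx : 0 < x) :
    Filter.Tendsto
      (fun N : ℕ =>
        (q * x / N) ^ (-R) *
          ∑ k ∈ Finset.range (N + 1),
            (-1 : ℝ) ^ k * genBinom R k * (x - k * (q * x / N)))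
      Filter.atTop
      (nhds (Real.sin (Real.pi * R) / Real.pi * Real.Gamma R * q ^ (-R) * x ^ (1 - R)
        * (1 - R * q / (R - 1)))) :=
  coupled_GL_linear_limit_general R hR0 hR1 q x hq hx
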